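/- arXiv:2209.07415 — 2 statements merged into one kernel-verified Lean document; each statement's English description precedes it below -/
import Mathlib

section
/- Let F: ℝ → [0,1] be a continuous distribution function and let X be a random variable with distribution function F. Then F(X) is uniformly distributed on [0,1]. -/
/-!
Let `μ` be the law of `X`, so that `F` is the cdf of `μ`. For `t < 1` the set `{F ≤ t}` is a closed
lower set, bounded above because `F → 1`. If it is empty, then `t ≤ 0` because `F → 0`; otherwise it
is `Iic a` for its supremum `a`, and `F a = t` because the open set `{F < t}` cannot contain `a`.
Either way `μ {F ≤ t} = max t 0`, while `{F ≤ t}` is everything for `t ≥ 1`: this is the cdf of the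
uniform law on `[0, 1]`.
-/

open MeasureTheory Set ProbabilityTheory

theorem Monotone.exists_preimage_Iic_eq_Iic {α β : Type*} [ConditionallyCompleteLinearOrder α]
    [TopologicalSpace α] [OrderTopology α] [DenselyOrdered α] [NoMaxOrder α] [LinearOrder β]
    [TopologicalSpace β] [OrderClosedTopology β] {f : α → β} (hmono : Monotone f)
    (hf : Continuous f) {t : β} (hne : (f ⁻¹' Iic t).Nonempty) (hbdd : BddAbove (f ⁻¹' Iic t)) :
    ∃ a, f a = t ∧ f ⁻¹' Iic t = Iic a := by
  set S := f ⁻¹' Iic t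
  have hsup : sSup S ∈ S := (isClosed_Iic.preimage hf).csSup_mem hne hbdd
  have hS : S = Iic (sSup S) :=
    Subset.antisymm (fun x hx ↦ le_csSup hbdd hx) fun x hx ↦ le_trans (hmono hx) hsup
  refine ⟨sSup S, le_antisymm hsup (not_lt.mp fun hlt ↦ ?_), hS⟩
  have hopen : f ⁻¹' Iio t ⊆ interior (Iic (sSup S)) :=
    (isOpen_Iio.preimage hf).subset_interior_iff.mpr (hS ▸ preimage_mono Iio_subset_Iic_self)
  rw [interior_Iic] at hopen
  exact lt_irrefl _ (hopen hlt)

theorem ProbabilityTheory.measure_cdf_preimage_Iic {μ : Measure ℝ} [IsProbabilityMeasure μ]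
    (hμ : Continuous (cdf μ)) (t : ℝ) : μ (cdf μ ⁻¹' Iic t) = ENNReal.ofReal (min t 1) := by
  rcases le_or_gt 1 t with ht1 | ht1
  · have : cdf μ ⁻¹' Iic t = univ := eq_univ_of_forall fun x ↦ (cdf_le_one μ x).trans ht1
    rw [this, measure_univ, min_eq_right ht1, ENNReal.ofReal_one]
  rw [min_eq_left ht1.le]
  rcases (cdf μ ⁻¹' Iic t).eq_empty_or_nonempty with hempty | hne
  · have ht0 : t ≤ 0 := not_lt.mp fun ht0 ↦
      have ⟨x, hx⟩ := ((tendsto_cdf_atBot μ).eventually (eventually_lt_nhds ht0)).exists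
      hempty.subset (show x ∈ cdf μ ⁻¹' Iic t from hx.le)
    rw [hempty, measure_empty, ENNReal.ofReal_of_nonpos ht0]
  have hbdd : BddAbove (cdf μ ⁻¹' Iic t) := by
    obtain ⟨b, hb⟩ := ((tendsto_cdf_atTop μ).eventually (eventually_gt_nhds ht1)).exists
    exact ⟨b, fun x hx ↦ (monotone_cdf μ).reflect_lt (hx.trans_lt hb) |>.le⟩
  obtain ⟨a, hFa, hS⟩ := (monotone_cdf μ).exists_preimage_Iic_eq_Iic hμ hne hbdd
  rw [hS, ← ofReal_cdf, hFa]

theorem ProbabilityTheory.map_cdf_eq_restrict_Icc {μ : Measure ℝ} [IsProbabilityMeasure μ]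
    (hμ : Continuous (cdf μ)) : μ.map (cdf μ) = volume.restrict (Icc 0 1) := by
  have : IsProbabilityMeasure (μ.map (cdf μ)) :=
    Measure.isProbabilityMeasure_map hμ.measurable.aemeasurable
  refine Measure.ext_of_Iic _ _ fun t ↦ ?_
  rw [Measure.map_apply hμ.measurable measurableSet_Iic, measure_cdf_preimage_Iic hμ,
    Measure.restrict_apply measurableSet_Iic, ← Ici_inter_Iic, inter_left_comm, Iic_inter_Iic,
    Ici_inter_Iic, Real.volume_Icc, sub_zero]

/-- Probability integral transform: if `X` has continuous distribution function `F`,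
then `F(X)` is uniformly distributed on `[0,1]`. -/
theorem probability_integral_transform {Ω : Type*} [MeasurableSpace Ω] (P : Measure Ω)
    [IsProbabilityMeasure P] (X : Ω → ℝ) (hX : Measurable X)
    (F : ℝ → ℝ) (hF : Continuous F)
    (hcdf : ∀ x, F x = (P {ω | X ω ≤ x}).toReal) :
    Measure.map (fun ω => F (X ω)) P = volume.restrict (Set.Icc (0 : ℝ) 1) := by
  have : IsProbabilityMeasure (P.map X) := Measure.isProbabilityMeasure_map hX.aemeasurable
  have hF_eq : F = cdf (P.map X) := funext fun x ↦ by
    rw [cdf_eq_real, measureReal_def, Measure.map_apply hX measurableSet_Iic, hcdf]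
    rfl
  change Measure.map (F ∘ X) P = _
  rw [← Measure.map_map hF.measurable hX]
  subst hF_eq
  exact map_cdf_eq_restrict_Icc hF
end

section
/- The entropic risk measure admits the dual (variational) representation: for bounded X, (1/γ) log E_ℙ[exp(−γX)] = sup over probability measures Q absolutely continuous w.r.t. ℙ of ( E_Q[−X] − (1/γ) H(Q|ℙ) ), where H(Q|ℙ) = E_Q[log(dQ/dℙ)] is the relative entropy. -/
/-! Gibbs' variational principle. Write `Z = ∫ exp f dP` and let `P_f = P.tilted f` be the Gibbs
measure, with `dP_f/dP = exp f / Z`. For every `Q ≪ P` the chain rule for log-likelihood ratios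
gives `H(Q|P_f) = H(Q|P) - E_Q[f] + log Z`, so nonnegativity of relative entropy yields
`E_Q[f] - H(Q|P) ≤ log Z`, with equality at `Q = P_f`. Taking `f = -γX` and dividing by `γ` gives
the dual representation. -/

open MeasureTheory Real

section GibbsVariational

variable {Ω : Type*} [MeasurableSpace Ω] {P Q : Measure Ω} {f : Ω → ℝ}

lemma integral_llr_nonneg [IsProbabilityMeasure Q] [IsProbabilityMeasure P] (hQP : Q ≪ P)
    (h_int : Integrable (llr Q P) Q) : 0 ≤ ∫ x, llr Q P x ∂Q := by
  simpa using InformationTheory.integral_llr_add_sub_measure_univ_nonneg hQP h_int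

lemma integral_sub_integral_llr_le_log_integral_exp [IsProbabilityMeasure P]
    [IsProbabilityMeasure Q] (hQP : Q ≪ P) (hfQ : Integrable f Q)
    (hfP : Integrable (fun x ↦ exp (f x)) P) (h_int : Integrable (llr Q P) Q) :
    ∫ x, f x ∂Q - ∫ x, llr Q P x ∂Q ≤ log (∫ x, exp (f x) ∂P) := by
  have : IsProbabilityMeasure (P.tilted f) := isProbabilityMeasure_tilted hfP
  have h_gibbs := integral_llr_nonneg (hQP.trans (absolutelyContinuous_tilted hfP))
    (integrable_llr_tilted_right hQP hfQ h_int hfP)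
  rw [integral_llr_tilted_right hQP hfQ hfP h_int] at h_gibbs
  linarith

lemma llr_tilted_self [SigmaFinite P] (hfP : Integrable (fun x ↦ exp (f x)) P)
    (hf : AEMeasurable f P) :
    llr (P.tilted f) P =ᵐ[P.tilted f] fun x ↦ f x - log (∫ z, exp (f z) ∂P) := by
  refine (tilted_absolutelyContinuous P f).ae_le ?_
  filter_upwards [llr_tilted_left .rfl hfP hf, llr_self P] with x hx hx_self
  rw [hx, hx_self, Pi.zero_apply, add_zero]

lemma integrable_llr_tilted_self [SigmaFinite P] (hfP : Integrable (fun x ↦ exp (f x)) P)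
    (hf : AEMeasurable f P) (hf_tilted : Integrable f (P.tilted f)) :
    Integrable (llr (P.tilted f) P) (P.tilted f) :=
  (integrable_congr (llr_tilted_self hfP hf)).mpr (hf_tilted.sub (integrable_const _))

lemma integral_sub_integral_llr_tilted_self [IsProbabilityMeasure P]
    (hfP : Integrable (fun x ↦ exp (f x)) P) (hf : AEMeasurable f P)
    (hf_tilted : Integrable f (P.tilted f)) :
    ∫ x, f x ∂(P.tilted f) - ∫ x, llr (P.tilted f) P x ∂(P.tilted f)
      = log (∫ x, exp (f x) ∂P) := by
  have : IsProbabilityMeasure (P.tilted f) := isProbabilityMeasure_tilted hfP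
  rw [integral_congr_ae (llr_tilted_self hfP hf), integral_sub hf_tilted (integrable_const _)]
  simp

end GibbsVariational

/-- Dual (variational) representation of the entropic risk measure: for bounded `X`,
`(1/γ) log E_P[exp(−γX)] = sup_{Q ≪ P} ( E_Q[−X] − (1/γ) H(Q|P) )`, where the relative
entropy is `H(Q|P) = E_Q[log(dQ/dP)]` (the supremum being over probability measures `Q`
absolutely continuous w.r.t. `P` with finite relative entropy). -/
theorem entropic_risk_measure_dual {Ω : Type*} [MeasurableSpace Ω] (P : Measure Ω)
    [IsProbabilityMeasure P] (X : Ω → ℝ) (hX : Measurable X) (C : ℝ) (hbd : ∀ ω, |X ω| ≤ C)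
    (γ : ℝ) (hγ : 0 < γ) :
    (1 / γ) * Real.log (∫ ω, Real.exp (-γ * X ω) ∂P)
      = sSup {r : ℝ | ∃ Q : Measure Ω, IsProbabilityMeasure Q ∧ Q ≪ P ∧
          Integrable (llr Q P) Q ∧
          r = (∫ ω, -X ω ∂Q) - (1 / γ) * ∫ ω, llr Q P ω ∂Q} := by
  have hX_int (Q : Measure Ω) [IsFiniteMeasure Q] : Integrable X Q :=
    .of_bound hX.aestronglyMeasurable C (.of_forall hbd)
  have hexp_int : Integrable (fun ω ↦ exp (-γ * X ω)) P := by
    refine .of_bound (by fun_prop) (exp (γ * C)) (.of_forall fun ω ↦ ?_)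
    rw [norm_of_nonneg (exp_pos _).le, exp_le_exp, neg_mul, neg_le]
    nlinarith [neg_abs_le (X ω), hbd ω]
  have h_scale (Q : Measure Ω) : ∫ ω, -X ω ∂Q - 1 / γ * ∫ ω, llr Q P ω ∂Q
      = 1 / γ * (∫ ω, -γ * X ω ∂Q - ∫ ω, llr Q P ω ∂Q) := by
    rw [integral_neg, integral_const_mul]
    field_simp
  have h_tilted_int : Integrable (-γ * X ·) (P.tilted (-γ * X ·)) := (hX_int _).const_mul _
  refine (IsGreatest.csSup_eq ⟨?_, ?_⟩).symm
  · refine ⟨P.tilted (-γ * X ·), isProbabilityMeasure_tilted hexp_int,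
      tilted_absolutelyContinuous P _,
      integrable_llr_tilted_self hexp_int (by fun_prop) h_tilted_int, ?_⟩
    rw [h_scale, integral_sub_integral_llr_tilted_self hexp_int (by fun_prop) h_tilted_int]
  · rintro _ ⟨Q, hQ, hQP, h_int, rfl⟩
    rw [h_scale]
    gcongr
    exact integral_sub_integral_llr_le_log_integral_exp hQP ((hX_int Q).const_mul _) hexp_int
      h_int
end
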